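/- Let Q be a Dynkin quiver, and let M̃_d denote the rigid (generic) representation of dimension vector d. If a subrepresentation N ⊆ M̃_d of dimension vector e exists, then the rigid representation M̃_e embeds into M̃_d, and there is a short exact sequence 0 → M̃_e → M̃_d → M̃_{d−e} → 0 where M̃_{d−e} is the rigid representation of dimension vector d−e. -/

import Mathlib

/-!
STATEMENT 8: Let Q be a Dynkin quiver, and let `M̃_f` denote the rigid (generic)
representation of dimension vector f (characterized by `Ext¹(M̃_f, M̃_f) = 0`).
If a subrepresentation `N ⊆ M̃_d` of dimension vector e exists, then the rigid
representation `M̃_e` embeds into `M̃_d` and there is a short exact sequence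
`0 → M̃_e → M̃_d → M̃_{d−e} → 0`.
-/

noncomputable section
open Matrix

variable {V A : Type}

/-- A complex representation of the quiver `(V, A, s, t)` of dimension vector `d`. -/
abbrev QRep (s t : A → V) (d : V → ℕ) : Type :=
  ∀ a : A, Matrix (Fin (d (t a))) (Fin (d (s a))) ℂ

/-- The quiver Grassmannian `Gr_e(M)`: families of subspaces `N i ⊆ ℂ^{d i}` of
dimension `e i` with `M_a (N (s a)) ⊆ N (t a)` for every arrow. -/
def SubRep (s t : A → V) {d : V → ℕ} (M : QRep s t d) (e : V → ℕ) : Type :=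
  {N : ∀ i : V, Submodule ℂ (Fin (d i) → ℂ) //
    (∀ i, Module.finrank ℂ (N i) = e i) ∧
    ∀ a : A, (N (s a)).map (M a).mulVecLin ≤ N (t a)}

/-- The map `Φ^M_N`, whose cokernel is `Ext¹_Q(N,M)`. -/
def PhiFun (s t : A → V) {e d : V → ℕ} (N : QRep s t e) (M : QRep s t d) :
    (∀ i : V, Matrix (Fin (d i)) (Fin (e i)) ℂ) →
      (∀ a : A, Matrix (Fin (d (t a))) (Fin (e (s a))) ℂ) :=
  fun f a => M a * f (s a) - f (t a) * N a

/-- `Ext¹_Q(N, M) = 0`, expressed as surjectivity of `Φ^M_N` (whose cokernel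
computes `Ext¹` via the standard resolution over the path algebra). -/
def ExtVanish (s t : A → V) {e d : V → ℕ} (N : QRep s t e) (M : QRep s t d) : Prop :=
  Function.Surjective (PhiFun s t N M)

/-- A representation is rigid if `Ext¹_Q(M, M) = 0`. -/
def Rigid (s t : A → V) {d : V → ℕ} (M : QRep s t d) : Prop :=
  ExtVanish s t M M

/-- The Euler form `⟨x,y⟩ = Σ_i x i * y i − Σ_a x (s a) * y (t a)` of the quiver. -/
def eulerForm [Fintype V] [Fintype A] (s t : A → V) (x y : V → ℤ) : ℤ :=
  (∑ i : V, x i * y i) - ∑ a : A, x (s a) * y (t a)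

/-- The quiver is Dynkin (disjoint union of simply-laced Dynkin diagrams), i.e. its
Tits form is positive definite. -/
def IsDynkin [Fintype V] [Fintype A] (s t : A → V) : Prop :=
  ∀ x : V → ℤ, x ≠ 0 → 0 < eulerForm s t x x

/-- Morphisms of representations `X → Y`, given by matrices `φ i` with
`Y_a φ_{s a} = φ_{t a} X_a`. -/
def RHom (s t : A → V) {dX dY : V → ℕ} (X : QRep s t dX) (Y : QRep s t dY) : Type :=
  {φ : ∀ i : V, Matrix (Fin (dY i)) (Fin (dX i)) ℂ //
    ∀ a : A, Y a * φ (s a) = φ (t a) * X a}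

/-
Over `ℂ` a rigid representation `W` has an open orbit: the intertwining equation
`g (t a) * W a = Y a * g (s a)` is linear in the tuple `g`, for `Y = W` it is `-Φ^W_W g = 0` with
`Φ^W_W` surjective, so its solution `g = 1` persists, invertible, for `Y` near `W`. Rigidity
fails only at finitely many points of a complex line through a rigid point, and a cofinite subset
of `ℂ` is connected; hence any two rigid representations of the same dimension vector are
isomorphic.

Conjugating `M̃_d` so that `N` becomes the span of the first `e i` coordinates makes it block
upper triangular. Moving its diagonal blocks linearly towards `M̃_e` and `M̃_{d-e}` keeps it
triangular, and for all but finitely many times the representation and both diagonal blocks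
are rigid, hence isomorphic to `M̃_d`, `M̃_e` and `M̃_{d-e}`. The block inclusion and
projection then give the short exact sequence.
-/

open Function Filter Topology

section LinearAlgebra

variable {K V W : Type*} [Field K] [AddCommGroup V] [Module K V] [AddCommGroup W] [Module K W]

/- With `σ` a right inverse of `A + z₀ • B`, if `A + z • B` is not surjective then
`-(z - z₀)⁻¹` is an eigenvalue of `B ∘ σ`. -/
theorem LinearMap.finite_setOf_not_surjective_add_smul [FiniteDimensional K W]
    (A B : V →ₗ[K] W) {z₀ : K} (h : Surjective (A + z₀ • B)) :
    {z : K | ¬ Surjective (A + z • B)}.Finite := by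
  obtain ⟨σ, hσ⟩ := (A + z₀ • B).exists_rightInverse_of_surjective (range_eq_top.mpr h)
  refine ((Module.End.finite_hasEigenvalue (B ∘ₗ σ)).image fun μ => z₀ - μ⁻¹).subset
    fun z hz => ?_
  have hcomp : (A + z • B) ∘ₗ σ = LinearMap.id + (z - z₀) • (B ∘ₗ σ) := by
    rw [← hσ]; ext x; simp [sub_smul]
  have hinj : ¬ Injective ((A + z • B) ∘ₗ σ) := fun hinj => by
    have := surjective_of_injective hinj
    rw [coe_comp] at this
    exact hz this.of_comp
  obtain ⟨x, hx, hx0⟩ : ∃ x, ((A + z • B) ∘ₗ σ) x = 0 ∧ x ≠ 0 := by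
    by_contra! H
    exact hinj ((injective_iff_map_eq_zero _).mpr H)
  rw [hcomp] at hx
  have hz₀ : z - z₀ ≠ 0 := by
    rintro h0; rw [h0] at hx; simp at hx; exact hx0 hx
  refine ⟨-(z - z₀)⁻¹, Module.End.hasEigenvalue_of_hasEigenvector ⟨?_, hx0⟩, by simp⟩
  rw [Module.End.mem_eigenspace_iff]
  have : (z - z₀) • (B ∘ₗ σ) x = -x := by simpa [add_eq_zero_iff_eq_neg'] using hx
  rw [neg_smul, ← smul_neg, ← this, inv_smul_smul₀ hz₀]

theorem Submodule.exists_linearEquiv_map_eq [FiniteDimensional K V] {p q : Submodule K V}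
    (h : Module.finrank K p = Module.finrank K q) :
    ∃ e : V ≃ₗ[K] V, p.map (e : V →ₗ[K] V) = q := by
  obtain ⟨p', hp⟩ := p.exists_isCompl
  obtain ⟨q', hq⟩ := q.exists_isCompl
  have h' : Module.finrank K p' = Module.finrank K q' := by
    have := p.finrank_add_eq_of_isCompl hp
    have := q.finrank_add_eq_of_isCompl hq
    omega
  let e : V ≃ₗ[K] V := (p.prodEquivOfIsCompl p' hp).symm ≪≫ₗ
    ((LinearEquiv.ofFinrankEq _ _ h).prodCongr (LinearEquiv.ofFinrankEq _ _ h')) ≪≫ₗ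
    q.prodEquivOfIsCompl q' hq
  refine ⟨e, eq_of_le_of_finrank_eq ?_ (by rw [LinearEquiv.finrank_map_eq, h])⟩
  rintro _ ⟨x, hx, rfl⟩
  simp [e, prodEquivOfIsCompl_symm_apply_left p p' hp ⟨x, hx⟩]

end LinearAlgebra

theorem LinearMap.eventually_exists_mem_add_apply_eq_zero {𝕜 E F G : Type*}
    [NontriviallyNormedField 𝕜] [CompleteSpace 𝕜]
    [AddCommGroup E] [Module 𝕜 E] [TopologicalSpace E] [IsTopologicalAddGroup E]
    [ContinuousSMul 𝕜 E] [T2Space E] [FiniteDimensional 𝕜 E]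
    [AddCommGroup F] [Module 𝕜 F] [TopologicalSpace F] [IsTopologicalAddGroup F]
    [ContinuousSMul 𝕜 F]
    [AddCommGroup G] [Module 𝕜 G] [TopologicalSpace G] [IsTopologicalAddGroup G]
    [ContinuousSMul 𝕜 G] [T2Space G] [FiniteDimensional 𝕜 G]
    (L₀ : F →ₗ[𝕜] G) (B : E →ₗ[𝕜] F →ₗ[𝕜] G) {v₀ : E} {f₀ : F}
    (hsurj : Surjective (L₀ + B v₀)) (hf₀ : (L₀ + B v₀) f₀ = 0) {U : Set F} (hU : U ∈ 𝓝 f₀) :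
    ∀ᶠ v in 𝓝 v₀, ∃ f ∈ U, (L₀ + B v) f = 0 := by
  obtain ⟨σ, hσ⟩ := (L₀ + B v₀).exists_rightInverse_of_surjective (range_eq_top.mpr hsurj)
  let b := Module.finBasis 𝕜 G
  -- the zero is sought as `f₀ - σ x`; in coordinates `x` solves `M v *ᵥ x = c v`, and `M v₀ = 1`
  let M : E → Matrix _ _ 𝕜 := fun v => toMatrix b b ((L₀ + B v) ∘ₗ σ)
  let c : E → _ := fun v => b.equivFun ((L₀ + B v) f₀)
  let f : E → F := fun v => f₀ - σ (b.equivFun.symm ((M v)⁻¹ *ᵥ c v))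
  have hM : Continuous M := by
    have : M = fun v => toMatrix b b (L₀ ∘ₗ σ) +
        ((toMatrix b b).toLinearMap ∘ₗ lcomp 𝕜 G σ ∘ₗ B) v := by
      ext1 v; simp only [M, add_comp, map_add]; rfl
    rw [this]
    exact continuous_const.add (continuous_of_finiteDimensional _)
  have hc : Continuous c := by
    have : c = fun v => b.equivFun (L₀ f₀) + (b.equivFun.toLinearMap ∘ₗ B.flip f₀) v := by
      ext1 v; simp [c]
    rw [this]
    exact continuous_const.add (continuous_of_finiteDimensional _)
  have hM₀ : M v₀ = 1 := by simp [M, hσ]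
  have hc₀ : c v₀ = 0 := by simp only [c, hf₀, map_zero]
  have hf : Tendsto f (𝓝 v₀) (𝓝 f₀) := by
    have hinv : ContinuousAt (fun v => (M v)⁻¹) v₀ := by
      refine (continuousAt_matrix_inv _ ?_).comp hM.continuousAt
      rw [hM₀, Matrix.det_one]
      exact NormedRing.inverse_continuousAt (1 : 𝕜ˣ)
    have hx : ContinuousAt (fun v => (M v)⁻¹ *ᵥ c v) v₀ :=
      (continuous_fst.matrix_mulVec continuous_snd).continuousAt.comp
        (hinv.prodMk hc.continuousAt)
    have hlin : Continuous (σ ∘ₗ b.equivFun.symm.toLinearMap) :=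
      continuous_of_finiteDimensional _
    have hf₀' : f v₀ = f₀ := by simp [f, hc₀]
    have : ContinuousAt f v₀ := continuousAt_const.sub (hlin.continuousAt.comp hx)
    exact hf₀' ▸ this.tendsto
  have hdet : ∀ᶠ v in 𝓝 v₀, (M v).det ≠ 0 :=
    hM.matrix_det.continuousAt.eventually_ne (by simp [hM₀])
  filter_upwards [hf hU, hdet] with v hfU hv
  refine ⟨f v, hfU, b.equivFun.injective ?_⟩
  have hcoord : ∀ y, b.equivFun (((L₀ + B v) ∘ₗ σ) (b.equivFun.symm y)) = M v *ᵥ y := by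
    intro y
    have := toMatrix_mulVec_repr b b ((L₀ + B v) ∘ₗ σ) (b.equivFun.symm y)
    rw [← b.equivFun_apply, ← b.equivFun_apply, b.equivFun.apply_symm_apply] at this
    exact this.symm
  have := hcoord ((M v)⁻¹ *ᵥ c v)
  simp only [comp_apply] at this
  simp only [f, map_sub, this, Matrix.mulVec_mulVec,
    Matrix.mul_nonsing_inv _ (isUnit_iff_ne_zero.mpr hv), Matrix.one_mulVec, map_zero]
  simp [c]

namespace Matrix

section Units

variable {R m n o : Type*} [CommRing R] [Fintype m] [Fintype n] [Fintype o]
  [DecidableEq m] [DecidableEq n] [DecidableEq o]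

theorem GeneralLinearGroup.bijective_mulVecLin (u : GL n R) :
    Bijective (u : Matrix n n R).mulVecLin := by
  rw [← coe_toLin]
  exact (LinearMap.GeneralLinearGroup.generalLinearEquiv R _ (toLin u)).bijective

theorem exists_generalLinearGroup_map_mulVecLin_eq {K : Type*} [Field K]
    {p q : Submodule K (n → K)} (h : Module.finrank K p = Module.finrank K q) :
    ∃ P : GL n K, p.map (P : Matrix n n K).mulVecLin = q := by
  obtain ⟨e, he⟩ := Submodule.exists_linearEquiv_map_eq h
  refine ⟨GeneralLinearGroup.toLin.symm
    ((LinearMap.GeneralLinearGroup.generalLinearEquiv K _).symm e), ?_⟩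
  rw [← GeneralLinearGroup.coe_toLin, MulEquiv.apply_symm_apply,
    ← LinearMap.GeneralLinearGroup.generalLinearEquiv_to_linearMap, MulEquiv.apply_symm_apply, he]

theorem shortExact_units_mul {J : Matrix o m R} {K : Matrix n o R}
    (hJ : Injective J.mulVecLin) (hK : Surjective K.mulVecLin)
    (hJK : Exact J.mulVecLin K.mulVecLin) (P : GL o R) (h : GL m R) (k : GL n R) :
    Injective ((P : Matrix o o R) * (J * (h : Matrix m m R))).mulVecLin ∧
      Surjective ((k : Matrix n n R) * (K * (↑P⁻¹ : Matrix o o R))).mulVecLin ∧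
      Exact ((P : Matrix o o R) * (J * (h : Matrix m m R))).mulVecLin
        ((k : Matrix n n R) * (K * (↑P⁻¹ : Matrix o o R))).mulVecLin := by
  have hP := GeneralLinearGroup.bijective_mulVecLin P
  have hh := GeneralLinearGroup.bijective_mulVecLin h
  have hk := GeneralLinearGroup.bijective_mulVecLin k
  simp only [mulVecLin_mul, LinearMap.coe_comp]
  refine ⟨hP.injective.comp (hJ.comp hh.injective),
    hk.surjective.comp (hK.comp (GeneralLinearGroup.bijective_mulVecLin P⁻¹).surjective), ?_⟩
  rw [← LinearMap.coe_comp, ← LinearMap.coe_comp, ← LinearMap.coe_comp, ← LinearMap.coe_comp,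
    ← LinearMap.comp_assoc, hh.surjective.comp_exact_iff_exact,
    hk.injective.comp_exact_iff_exact]
  have := LinearEquiv.conj_exact_iff_exact J.mulVecLin K.mulVecLin
    (toLinearEquiv' (P : Matrix o o R) inferInstance)
  rwa [toLinearEquiv'_apply, toLinearEquiv'_symm_apply, invOf_units, toLin'_apply',
    toLin'_apply', iff_true_right hJK] at this

end Units

section Blocks

variable (R : Type*) {m n o : Type*} [CommRing R] [Fintype m] [Fintype n]
  [DecidableEq m] [DecidableEq n] (σ : m ⊕ n ≃ o)

/- The matrices of `LinearMap.inl`, `LinearMap.inr`, `LinearMap.fst`, `LinearMap.snd`,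
transported along `σ`. -/
def inlMatrix : Matrix o m R := (1 : Matrix (m ⊕ n) (m ⊕ n) R).submatrix σ.symm Sum.inl

def inrMatrix : Matrix o n R := (1 : Matrix (m ⊕ n) (m ⊕ n) R).submatrix σ.symm Sum.inr

def fstMatrix : Matrix m o R := (1 : Matrix (m ⊕ n) (m ⊕ n) R).submatrix Sum.inl σ.symm

def sndMatrix : Matrix n o R := (1 : Matrix (m ⊕ n) (m ⊕ n) R).submatrix Sum.inr σ.symm

theorem inlMatrix_mul_fstMatrix_add_inrMatrix_mul_sndMatrix [DecidableEq o] :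
    inlMatrix R σ * fstMatrix R σ + inrMatrix R σ * sndMatrix R σ = 1 := by
  ext i j
  simp only [inlMatrix, inrMatrix, fstMatrix, sndMatrix, add_apply, mul_apply, submatrix_apply]
  rw [← Fintype.sum_sum_type (f := fun x => (1 : Matrix (m ⊕ n) (m ⊕ n) R) (σ.symm i) x *
    (1 : Matrix (m ⊕ n) (m ⊕ n) R) x (σ.symm j)), ← mul_apply, mul_one,
    ← submatrix_apply (A := 1), submatrix_one_equiv]

variable [Fintype o]

theorem fstMatrix_mul_inlMatrix : fstMatrix R σ * inlMatrix R σ = 1 := by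
  rw [fstMatrix, inlMatrix, ← submatrix_mul _ _ _ _ _ σ.symm.bijective, mul_one,
    submatrix_one _ Sum.inl_injective]

theorem sndMatrix_mul_inrMatrix : sndMatrix R σ * inrMatrix R σ = 1 := by
  rw [sndMatrix, inrMatrix, ← submatrix_mul _ _ _ _ _ σ.symm.bijective, mul_one,
    submatrix_one _ Sum.inr_injective]

theorem sndMatrix_mul_inlMatrix : sndMatrix R σ * inlMatrix R σ = 0 := by
  rw [sndMatrix, inlMatrix, ← submatrix_mul _ _ _ _ _ σ.symm.bijective, mul_one]
  ext i j
  simp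

theorem fstMatrix_mul_inrMatrix : fstMatrix R σ * inrMatrix R σ = 0 := by
  rw [fstMatrix, inrMatrix, ← submatrix_mul _ _ _ _ _ σ.symm.bijective, mul_one]
  ext i j
  simp

variable {R σ} in
theorem fstMatrix_mul_inlMatrix_assoc {l : Type*} (M : Matrix m l R) :
    fstMatrix R σ * (inlMatrix R σ * M) = M := by
  rw [← Matrix.mul_assoc, fstMatrix_mul_inlMatrix, Matrix.one_mul]

variable {R σ} in
theorem sndMatrix_mul_inrMatrix_assoc {l : Type*} (M : Matrix n l R) :
    sndMatrix R σ * (inrMatrix R σ * M) = M := by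
  rw [← Matrix.mul_assoc, sndMatrix_mul_inrMatrix, Matrix.one_mul]

variable {R σ} in
theorem sndMatrix_mul_inlMatrix_assoc {l : Type*} (M : Matrix m l R) :
    sndMatrix R σ * (inlMatrix R σ * M) = 0 := by
  rw [← Matrix.mul_assoc, sndMatrix_mul_inlMatrix, Matrix.zero_mul]

variable {R σ} in
theorem fstMatrix_mul_inrMatrix_assoc {l : Type*} (M : Matrix n l R) :
    fstMatrix R σ * (inrMatrix R σ * M) = 0 := by
  rw [← Matrix.mul_assoc, fstMatrix_mul_inrMatrix, Matrix.zero_mul]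

theorem injective_mulVecLin_inlMatrix : Injective (inlMatrix R σ).mulVecLin :=
  LeftInverse.injective (g := (fstMatrix R σ).mulVecLin) fun v => by
    simp [mulVec_mulVec, fstMatrix_mul_inlMatrix]

theorem surjective_mulVecLin_sndMatrix : Surjective (sndMatrix R σ).mulVecLin :=
  RightInverse.surjective (g := (inrMatrix R σ).mulVecLin) fun v => by
    simp [mulVec_mulVec, sndMatrix_mul_inrMatrix]

theorem exact_mulVecLin_inlMatrix_sndMatrix [DecidableEq o] :
    Exact (inlMatrix R σ).mulVecLin (sndMatrix R σ).mulVecLin := by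
  refine LinearMap.exact_of_comp_of_mem_range ?_ fun v hv => ⟨fstMatrix R σ *ᵥ v, ?_⟩
  · rw [← mulVecLin_mul, sndMatrix_mul_inlMatrix, mulVecLin_zero]
  · have := congrArg (· *ᵥ v) (inlMatrix_mul_fstMatrix_add_inrMatrix_mul_sndMatrix R σ)
    simp only [add_mulVec, ← mulVec_mulVec, one_mulVec] at this
    simpa [show sndMatrix R σ *ᵥ v = 0 from hv] using this

end Blocks

end Matrix

def RHom.comp {s t : A → V} {dX dY dZ : V → ℕ} {X : QRep s t dX} {Y : QRep s t dY}
    {Z : QRep s t dZ} (ψ : RHom s t Y Z) (φ : RHom s t X Y) : RHom s t X Z :=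
  ⟨fun i => ψ.1 i * φ.1 i, fun a => by
    rw [← Matrix.mul_assoc, ψ.2 a, Matrix.mul_assoc, φ.2 a, Matrix.mul_assoc]⟩

namespace QRep

variable {s t : A → V}

section Rigidity

variable {c : V → ℕ}

variable (s t c) in
def leftMul : QRep s t c →ₗ[ℂ] (∀ i, Matrix (Fin (c i)) (Fin (c i)) ℂ) →ₗ[ℂ] QRep s t c :=
  LinearMap.mk₂ ℂ (fun W g a => g (t a) * W a)
    (fun _ _ _ => by ext1; simp [Matrix.mul_add]) (fun _ _ _ => by ext1; simp)
    (fun _ _ _ => by ext1; simp [Matrix.add_mul]) (fun _ _ _ => by ext1; simp)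

variable (s t c) in
def rightMul : QRep s t c →ₗ[ℂ] (∀ i, Matrix (Fin (c i)) (Fin (c i)) ℂ) →ₗ[ℂ] QRep s t c :=
  LinearMap.mk₂ ℂ (fun W g a => W a * g (s a))
    (fun _ _ _ => by ext1; simp [Matrix.add_mul]) (fun _ _ _ => by ext1; simp)
    (fun _ _ _ => by ext1; simp [Matrix.mul_add]) (fun _ _ _ => by ext1; simp)

variable (s t c) in
def phi : QRep s t c →ₗ[ℂ] (∀ i, Matrix (Fin (c i)) (Fin (c i)) ℂ) →ₗ[ℂ] QRep s t c :=
  rightMul s t c - leftMul s t c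

theorem rigid_iff_surjective_phi {W : QRep s t c} : Rigid s t W ↔ Surjective (phi s t c W) :=
  Iff.rfl

def RepIso (X Y : QRep s t c) : Prop :=
  ∃ g : ∀ i, GL (Fin (c i)) ℂ, ∀ a, Y a * (g (s a)).val = (g (t a)).val * X a

theorem intertwines_inv {X Y : QRep s t c} {g : ∀ i, GL (Fin (c i)) ℂ}
    (hg : ∀ a, Y a * (g (s a)).val = (g (t a)).val * X a) (a : A) :
    X a * (g (s a))⁻¹.val = (g (t a))⁻¹.val * Y a := by
  calc X a * (g (s a))⁻¹.val = (g (t a))⁻¹.val * ((g (t a)).val * X a) * (g (s a))⁻¹.val := by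
        rw [← Matrix.mul_assoc, Units.inv_mul, Matrix.one_mul]
    _ = (g (t a))⁻¹.val * Y a := by
        rw [← hg a, Matrix.mul_assoc, Matrix.mul_assoc, Units.mul_inv, Matrix.mul_one]

theorem RepIso.symm {X Y : QRep s t c} : RepIso X Y → RepIso Y X
  | ⟨g, hg⟩ => ⟨fun i => (g i)⁻¹, intertwines_inv hg⟩

theorem RepIso.trans {X Y Z : QRep s t c} : RepIso X Y → RepIso Y Z → RepIso X Z
  | ⟨g, hg⟩, ⟨h, hh⟩ => ⟨fun i => h i * g i, fun a => by
    simp only [Units.val_mul, ← Matrix.mul_assoc, hh a]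
    rw [Matrix.mul_assoc, hg a, Matrix.mul_assoc]⟩

theorem _root_.Rigid.of_repIso {X Y : QRep s t c} (hX : Rigid s t X) : RepIso X Y → Rigid s t Y
  | ⟨g, hg⟩ => fun y => by
    obtain ⟨f, hf⟩ := hX fun a => (g (t a))⁻¹.val * y a * (g (s a)).val
    refine ⟨fun i => (g i).val * f i * (g i)⁻¹.val, funext fun a => ?_⟩
    have hY : Y a = (g (t a)).val * X a * (g (s a))⁻¹.val := by
      rw [← hg a, Matrix.mul_assoc, Units.mul_inv, Matrix.mul_one]
    have := congrFun hf a
    simp only [PhiFun] at this ⊢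
    calc Y a * ((g (s a)).val * f (s a) * (g (s a))⁻¹.val)
          - (g (t a)).val * f (t a) * (g (t a))⁻¹.val * Y a
        = (g (t a)).val * (X a * f (s a) - f (t a) * X a) * (g (s a))⁻¹.val := by
          simp only [hY, coe_units_inv, Matrix.mul_sub, Matrix.sub_mul, Matrix.mul_assoc,
            nonsing_inv_mul_cancel_left _ _ (isUnits_det_units _)]
      _ = y a := by
          simp only [this, coe_units_inv, Matrix.mul_assoc,
            mul_nonsing_inv_cancel_left _ _ (isUnits_det_units _),
            mul_nonsing_inv _ (isUnits_det_units _), Matrix.mul_one]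

theorem _root_.Rigid.finite_setOf_not_rigid_add_smul [Finite A] {P D : QRep s t c} {z₀ : ℂ}
    (h : Rigid s t (P + z₀ • D)) : {z : ℂ | ¬ Rigid s t (P + z • D)}.Finite := by
  simp only [rigid_iff_surjective_phi, map_add, map_smul] at h ⊢
  exact LinearMap.finite_setOf_not_surjective_add_smul _ _ h

theorem _root_.Rigid.eventually_repIso [Finite A] [Finite V] {W : QRep s t c} (hW : Rigid s t W) :
    ∀ᶠ Y in 𝓝 W, RepIso W Y := by
  let U : Set (∀ i, Matrix (Fin (c i)) (Fin (c i)) ℂ) := {g | ∀ i, (g i).det ≠ 0}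
  have hU : U ∈ 𝓝 1 := by
    refine IsOpen.mem_nhds ?_ (by simp [U])
    simp only [U, Set.ofPred_forall]
    exact isOpen_iInter_of_finite fun i =>
      isOpen_ne_fun (continuous_apply i).matrix_det continuous_const
  have hsurj : Surjective (leftMul s t c W + (-rightMul s t c) W) := by
    have : leftMul s t c W + (-rightMul s t c) W = -phi s t c W := by
      rw [phi, LinearMap.neg_apply, LinearMap.sub_apply, neg_sub, sub_eq_add_neg]
    rw [this]
    intro y
    obtain ⟨f, hf⟩ := rigid_iff_surjective_phi.mp hW (-y)
    exact ⟨f, by rw [LinearMap.neg_apply, hf, neg_neg]⟩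
  have h₁ : (leftMul s t c W + (-rightMul s t c) W) 1 = 0 := by
    ext1 a; simp [leftMul, rightMul]
  filter_upwards [LinearMap.eventually_exists_mem_add_apply_eq_zero _ _ hsurj h₁ hU]
    with Y ⟨g, hg, hY⟩
  refine ⟨fun i => GeneralLinearGroup.mkOfDetNeZero (g i) (hg i), fun a => ?_⟩
  have : g (t a) * W a - Y a * g (s a) = 0 := by
    simpa [leftMul, rightMul, sub_eq_add_neg] using congrFun hY a
  exact (sub_eq_zero.mp this).symm

theorem _root_.Rigid.repIso [Finite A] [Finite V] {X Y : QRep s t c} (hX : Rigid s t X)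
    (hY : Rigid s t Y) : RepIso X Y := by
  let γ : ℂ → QRep s t c := fun z => X + z • (Y - X)
  have hγ : Continuous γ := continuous_const.add (continuous_id.smul continuous_const)
  have hfin : {z | Rigid s t (γ z)}ᶜ.Finite :=
    Rigid.finite_setOf_not_rigid_add_smul (z₀ := 0) (by simpa using hX)
  have hconn : IsPreconnected {z | Rigid s t (γ z)} := by
    have := hfin.countable.isPathConnected_compl_of_one_lt_rank
      (by rw [Complex.rank_real_complex]; norm_num)
    rw [compl_compl] at this
    exact this.isConnected.isPreconnected
  have := hconn.induction₂ (fun z w => RepIso (γ z) (γ w))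
    (fun z hz => nhdsWithin_le_nhds ((hγ.tendsto z).eventually (Rigid.eventually_repIso hz)))
    (fun _ _ _ _ _ _ => RepIso.trans) (fun _ _ _ _ => RepIso.symm)
    (x := 0) (y := 1) (by simpa [γ] using hX) (by simpa [γ] using hY)
  simpa [γ] using this

end Rigidity

section Blocks

variable {d e f : V → ℕ} (σ : ∀ i, Fin (e i) ⊕ Fin (f i) ≃ Fin (d i))

def subBlock (W : QRep s t d) : QRep s t e :=
  fun a => fstMatrix ℂ (σ (t a)) * W a * inlMatrix ℂ (σ (s a))

def quotBlock (W : QRep s t d) : QRep s t f :=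
  fun a => sndMatrix ℂ (σ (t a)) * W a * inrMatrix ℂ (σ (s a))

def IsBlockTriangular (W : QRep s t d) : Prop :=
  ∀ a, sndMatrix ℂ (σ (t a)) * W a * inlMatrix ℂ (σ (s a)) = 0

def blockDiag (U : QRep s t e) (X : QRep s t f) : QRep s t d :=
  fun a => inlMatrix ℂ (σ (t a)) * U a * fstMatrix ℂ (σ (s a)) +
    inrMatrix ℂ (σ (t a)) * X a * sndMatrix ℂ (σ (s a))

theorem subBlock_add_smul (W D : QRep s t d) (z : ℂ) :
    subBlock σ (W + z • D) = subBlock σ W + z • subBlock σ D := by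
  ext1 a; simp [subBlock, Matrix.mul_add, Matrix.add_mul]

theorem quotBlock_add_smul (W D : QRep s t d) (z : ℂ) :
    quotBlock σ (W + z • D) = quotBlock σ W + z • quotBlock σ D := by
  ext1 a; simp [quotBlock, Matrix.mul_add, Matrix.add_mul]

theorem subBlock_blockDiag (U : QRep s t e) (X : QRep s t f) :
    subBlock σ (blockDiag σ U X) = U := by
  ext1 a
  simp only [subBlock, blockDiag, Matrix.mul_add, Matrix.mul_assoc,
    fstMatrix_mul_inlMatrix_assoc, fstMatrix_mul_inrMatrix_assoc, fstMatrix_mul_inlMatrix,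
    Matrix.mul_one, add_zero]

theorem quotBlock_blockDiag (U : QRep s t e) (X : QRep s t f) :
    quotBlock σ (blockDiag σ U X) = X := by
  ext1 a
  simp only [quotBlock, blockDiag, Matrix.mul_add, Matrix.mul_assoc,
    sndMatrix_mul_inlMatrix_assoc, sndMatrix_mul_inrMatrix_assoc, sndMatrix_mul_inrMatrix,
    Matrix.mul_one, zero_add]

theorem IsBlockTriangular.add_smul_blockDiag {W : QRep s t d} (hW : IsBlockTriangular σ W)
    (z : ℂ) (U : QRep s t e) (X : QRep s t f) :
    IsBlockTriangular σ (W + z • blockDiag σ U X) := fun a => by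
  simp only [blockDiag, Pi.add_apply, Pi.smul_apply, Matrix.mul_add, Matrix.add_mul,
    Matrix.mul_smul, Matrix.smul_mul, hW a, Matrix.mul_assoc, sndMatrix_mul_inlMatrix_assoc,
    sndMatrix_mul_inrMatrix_assoc, sndMatrix_mul_inlMatrix, Matrix.mul_zero, Matrix.zero_mul,
    add_zero, smul_zero]

theorem IsBlockTriangular.mul_inlMatrix {W : QRep s t d} (hW : IsBlockTriangular σ W) (a : A) :
    W a * inlMatrix ℂ (σ (s a)) = inlMatrix ℂ (σ (t a)) * subBlock σ W a :=
  calc W a * inlMatrix ℂ (σ (s a))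
      = (inlMatrix ℂ (σ (t a)) * fstMatrix ℂ (σ (t a)) +
          inrMatrix ℂ (σ (t a)) * sndMatrix ℂ (σ (t a))) * W a * inlMatrix ℂ (σ (s a)) := by
        rw [inlMatrix_mul_fstMatrix_add_inrMatrix_mul_sndMatrix, Matrix.one_mul]
    _ = inlMatrix ℂ (σ (t a)) * subBlock σ W a +
          inrMatrix ℂ (σ (t a)) * (sndMatrix ℂ (σ (t a)) * W a * inlMatrix ℂ (σ (s a))) := by
        simp only [subBlock, Matrix.add_mul, Matrix.mul_assoc]
    _ = _ := by rw [hW a, Matrix.mul_zero, add_zero]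

theorem IsBlockTriangular.quotBlock_mul_sndMatrix {W : QRep s t d} (hW : IsBlockTriangular σ W)
    (a : A) : quotBlock σ W a * sndMatrix ℂ (σ (s a)) = sndMatrix ℂ (σ (t a)) * W a :=
  calc quotBlock σ W a * sndMatrix ℂ (σ (s a))
      = sndMatrix ℂ (σ (t a)) * W a * inlMatrix ℂ (σ (s a)) * fstMatrix ℂ (σ (s a)) +
          quotBlock σ W a * sndMatrix ℂ (σ (s a)) := by
        rw [hW a, Matrix.zero_mul, zero_add]
    _ = sndMatrix ℂ (σ (t a)) * W a * (inlMatrix ℂ (σ (s a)) * fstMatrix ℂ (σ (s a)) +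
          inrMatrix ℂ (σ (s a)) * sndMatrix ℂ (σ (s a))) := by
        simp only [quotBlock, Matrix.mul_add, Matrix.mul_assoc]
    _ = _ := by rw [inlMatrix_mul_fstMatrix_add_inrMatrix_mul_sndMatrix, Matrix.mul_one]

def IsBlockTriangular.inclHom {W : QRep s t d} (hW : IsBlockTriangular σ W) :
    RHom s t (subBlock σ W) W :=
  ⟨fun i => inlMatrix ℂ (σ i), hW.mul_inlMatrix σ⟩

def IsBlockTriangular.projHom {W : QRep s t d} (hW : IsBlockTriangular σ W) :
    RHom s t W (quotBlock σ W) :=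
  ⟨fun i => sndMatrix ℂ (σ i), hW.quotBlock_mul_sndMatrix σ⟩

theorem exists_repIso_isBlockTriangular {M : QRep s t d} (N : SubRep s t M e) :
    ∃ W, IsBlockTriangular σ W ∧ RepIso W M := by
  have hrank : ∀ i, Module.finrank ℂ (LinearMap.range (inlMatrix ℂ (σ i)).mulVecLin) =
      Module.finrank ℂ (N.1 i) := fun i => by
    rw [LinearMap.finrank_range_of_inj (injective_mulVecLin_inlMatrix ℂ (σ i)), N.2.1 i,
      Module.finrank_fin_fun]
  choose P hP using fun i => exists_generalLinearGroup_map_mulVecLin_eq (hrank i)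
  refine ⟨fun a => (P (t a))⁻¹.val * M a * (P (s a)).val, fun a => ?_, P, fun a => ?_⟩
  · refine Matrix.toLin'.injective (LinearMap.ext fun v => ?_)
    -- `P` carries the first summand onto `N`, which `M` preserves
    have hN : M a *ᵥ ((P (s a)).val *ᵥ (inlMatrix ℂ (σ (s a)) *ᵥ v)) ∈ N.1 (t a) :=
      N.2.2 a ⟨_, hP (s a) ▸ ⟨_, ⟨v, rfl⟩, rfl⟩, rfl⟩
    rw [← hP (t a)] at hN
    obtain ⟨_, ⟨w, rfl⟩, hw⟩ := hN
    simp only [toLin'_apply, map_zero, LinearMap.zero_apply, ← mulVec_mulVec]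
    simp only [Matrix.mulVecLin_apply] at hw
    rw [← hw]
    simp only [mulVec_mulVec, coe_units_inv,
      nonsing_inv_mul_cancel_left _ _ (isUnits_det_units _), sndMatrix_mul_inlMatrix, zero_mulVec]
  · simp [← Matrix.mul_assoc]

theorem exists_isBlockTriangular_rigid [Finite A] [Finite V] {M : QRep s t d} {U : QRep s t e}
    {X : QRep s t f} (hM : Rigid s t M) (hU : Rigid s t U) (hX : Rigid s t X)
    (N : SubRep s t M e) :
    ∃ W, IsBlockTriangular σ W ∧ Rigid s t W ∧ Rigid s t (subBlock σ W) ∧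
      Rigid s t (quotBlock σ W) := by
  obtain ⟨W₀, hW₀, hiso⟩ := exists_repIso_isBlockTriangular σ N
  have hW₀rig : Rigid s t W₀ := hM.of_repIso hiso.symm
  let D := blockDiag σ (U - subBlock σ W₀) (X - quotBlock σ W₀)
  have h₁ := Rigid.finite_setOf_not_rigid_add_smul (D := D) (z₀ := 0) (by simpa using hW₀rig)
  have h₂ := Rigid.finite_setOf_not_rigid_add_smul (P := subBlock σ W₀)
    (D := U - subBlock σ W₀) (z₀ := 1) (by simpa using hU)
  have h₃ := Rigid.finite_setOf_not_rigid_add_smul (P := quotBlock σ W₀)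
    (D := X - quotBlock σ W₀) (z₀ := 1) (by simpa using hX)
  obtain ⟨z, hz⟩ := ((h₁.union h₂).union h₃).infinite_compl.nonempty
  simp only [Set.mem_compl_iff, Set.mem_union, Set.mem_ofPred_eq, not_or, not_not] at hz
  refine ⟨W₀ + z • D, hW₀.add_smul_blockDiag σ z _ _, hz.1.1, ?_, ?_⟩
  · rw [subBlock_add_smul, subBlock_blockDiag]
    exact hz.1.2
  · rw [quotBlock_add_smul, quotBlock_blockDiag]
    exact hz.2

end Blocks

end QRep

theorem rigid_ses_general [Fintype V] [Fintype A] (s t : A → V)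
    (d e : V → ℕ) (hle : ∀ i, e i ≤ d i)
    (Md : QRep s t d) (Me : QRep s t e) (Mde : QRep s t (fun i => d i - e i))
    (hMd : Rigid s t Md) (hMe : Rigid s t Me) (hMde : Rigid s t Mde)
    (hsub : Nonempty (SubRep s t Md e)) :
    ∃ (f : RHom s t Me Md) (g : RHom s t Md Mde),
      (∀ i, Function.Injective (f.1 i).mulVecLin) ∧
      (∀ i, Function.Surjective (g.1 i).mulVecLin) ∧
      ∀ i, LinearMap.range (f.1 i).mulVecLin = LinearMap.ker (g.1 i).mulVecLin := by
  obtain ⟨N⟩ := hsub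
  let σ i : Fin (e i) ⊕ Fin (d i - e i) ≃ Fin (d i) :=
    finSumFinEquiv.trans (finCongr (Nat.add_sub_cancel' (hle i)))
  obtain ⟨W, hW, hWrig, hUrig, hXrig⟩ := QRep.exists_isBlockTriangular_rigid σ hMd hMe hMde N
  obtain ⟨P, hP⟩ := hWrig.repIso hMd
  obtain ⟨h, hh⟩ := hMe.repIso hUrig
  obtain ⟨k, hk⟩ := hXrig.repIso hMde
  have hses i := shortExact_units_mul (injective_mulVecLin_inlMatrix ℂ (σ i))
    (surjective_mulVecLin_sndMatrix ℂ (σ i)) (exact_mulVecLin_inlMatrix_sndMatrix ℂ (σ i))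
    (P i) (h i) (k i)
  exact ⟨RHom.comp ⟨_, hP⟩ (hW.inclHom.comp ⟨_, hh⟩),
    RHom.comp ⟨_, hk⟩ (hW.projHom.comp ⟨_, QRep.intertwines_inv hP⟩),
    fun i => (hses i).1, fun i => (hses i).2.1, fun i => (hses i).2.2.linearMap_ker_eq.symm⟩

/-- If `M̃_d` has a subrepresentation of dimension vector `e`,
then there is a short exact sequence `0 → M̃_e → M̃_d → M̃_{d−e} → 0`. -/
theorem rigid_ses [Fintype V] [Fintype A] (s t : A → V)
    (hQ : IsDynkin s t) (d e : V → ℕ) (hle : ∀ i, e i ≤ d i)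
    (Md : QRep s t d) (Me : QRep s t e) (Mde : QRep s t (fun i => d i - e i))
    (hMd : Rigid s t Md) (hMe : Rigid s t Me) (hMde : Rigid s t Mde)
    (hsub : Nonempty (SubRep s t Md e)) :
    ∃ (f : RHom s t Me Md) (g : RHom s t Md Mde),
      (∀ i, Function.Injective (f.1 i).mulVecLin) ∧
      (∀ i, Function.Surjective (g.1 i).mulVecLin) ∧
      ∀ i, LinearMap.range (f.1 i).mulVecLin = LinearMap.ker (g.1 i).mulVecLin :=
  rigid_ses_general s t d e hle Md Me Mde hMd hMe hMde hsub

end
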